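/- Let n ≥ 1 be an integer such that 3 divides m = n+2 but m is not a power of 3. Then v_3(S(n)) is even. -/

import Mathlib

open MvPolynomial Finset

/-- `alph n i = (2n+1-i)! * i!` -/
def alph (n i : ℕ) : ℕ := (2*n+1-i).factorial * i.factorial

/-- `bet n i = (2n-i)! * (i+1)!` -/
def bet (n i : ℕ) : ℕ := (2*n-i).factorial * (i+1).factorial

/-- The coefficient `A_n` of `x^2` in the quadratic covariant `Q_n = (F,F)_{2n}`. -/
noncomputable def An (n : ℕ) : MvPolynomial ℕ ℤ :=
  ∑ i ∈ Finset.range (2*n+1),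
    MvPolynomial.C ((-1 : ℤ)^i * ((2*n).choose i : ℤ) * (alph n i : ℤ) * (bet n i : ℤ)) *
      X i * X (2*n - i)

/-- The coefficient `B_n` of `xz` in the quadratic covariant `Q_n = (F,F)_{2n}`. -/
noncomputable def Bn (n : ℕ) : MvPolynomial ℕ ℤ :=
  ∑ i ∈ Finset.range (2*n+1),
    MvPolynomial.C ((-1 : ℤ)^i * ((2*n).choose i : ℤ)) *
      (MvPolynomial.C ((alph n i : ℤ)^2) * X i * X (2*n+1-i) +
       MvPolynomial.C ((bet n i : ℤ)^2) * X (i+1) * X (2*n-i))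

/-- The coefficient `C_n` of `z^2` in the quadratic covariant `Q_n = (F,F)_{2n}`. -/
noncomputable def Cpoly (n : ℕ) : MvPolynomial ℕ ℤ :=
  ∑ i ∈ Finset.range (2*n+1),
    MvPolynomial.C ((-1 : ℤ)^i * ((2*n).choose i : ℤ) * (alph n i : ℤ) * (bet n i : ℤ)) *
      X (i+1) * X (2*n+1-i)

/-- The discriminant `Δ_n = B_n² − 4 A_n C_n` of the quadratic covariant. -/
noncomputable def Δn (n : ℕ) : MvPolynomial ℕ ℤ := Bn n ^ 2 - 4 * An n * Cpoly n

/-- `S(n)`: the content of `Δ_n`, i.e. the gcd of all its integer coefficients. -/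
noncomputable def Sn (n : ℕ) : ℤ :=
  (Δn n).support.gcd (fun m => MvPolynomial.coeff m (Δn n))

/-! Every coefficient of `A_n`, `B_n`, `C_n` is `±κ(i)` times an integer, where
`κ(i) = (2n)! · i! · (2n+1-i)!`; so if `3 ^ b` divides every `κ(i)`, then `3 ^ (2b)` divides `S(n)`.
By Kummer's theorem `v_3(κ(i))` is smallest when `binom(2n+1, i)` has the largest possible
valuation `log_3 (2n+1)`, and when `3 ∣ 2n+1` and `n+2` is not a power of `3` such an index `j`
can be taken with `j ≡ 1 (mod 3)` and `j ∉ {n, n+1}`. At the indicator of `{j, 2n+1-j}` the forms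
`A_n` and `C_n` vanish and `Δ_n` takes the value `(2 (2n+1-2j) κ(j))²`, of valuation exactly
`2 v_3(κ(j))` because `3 ∤ 2n+1-2j`. Since `S(n)` divides this value, `v_3(S(n)) = 2 v_3(κ(j))`. -/

theorem mod_eq_sub_one_of_dvd_add_one {d x : ℕ} (h : d ∣ x + 1) : x % d = d - 1 := by
  have hd : 0 < d := Nat.pos_of_dvd_of_pos h x.succ_pos
  have hdvd : d ∣ x % d + 1 := by
    have := Nat.div_add_mod x d
    exact (Nat.dvd_add_right (dvd_mul_right d (x / d))).mp (by rwa [← add_assoc, this])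
  have := Nat.le_of_dvd (Nat.succ_pos _) hdvd
  have := Nat.mod_lt x hd
  omega

theorem padicValNat_choose_eq_log {p m j : ℕ} [Fact p.Prime] (hjm : j ≤ m) (hpj : ¬ p ∣ j)
    (hdvd : p ^ Nat.log p m ∣ m - j + 1) : padicValNat p (m.choose j) = Nat.log p m := by
  rw [padicValNat_choose hjm (Nat.lt_succ_self _), filter_true_of_mem, Nat.card_Ico,
    Nat.succ_sub_one]
  intro t ht
  obtain ⟨ht1, htL⟩ := mem_Ico.mp ht
  have hcarry : (m - j) % p ^ t = p ^ t - 1 :=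
    mod_eq_sub_one_of_dvd_add_one ((pow_dvd_pow p (Nat.lt_succ_iff.mp htL)).trans hdvd)
  have hj : 0 < j % p ^ t := Nat.pos_of_ne_zero fun h0 =>
    hpj ((dvd_pow_self p (by omega)).trans (Nat.dvd_of_mod_eq_zero h0))
  omega

theorem padicValNat_factorial_mul_factorial_add_choose {p m i : ℕ} [Fact p.Prime] (him : i ≤ m) :
    padicValNat p (i.factorial * (m - i).factorial) + padicValNat p (m.choose i) =
      padicValNat p m.factorial := by
  rw [← padicValNat.mul (by positivity) (Nat.choose_pos him).ne', mul_comm, ← mul_assoc,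
    Nat.choose_mul_factorial_mul_factorial him]

theorem padicValNat_factorial_mul_factorial_le_of_choose_eq_log {p m i j : ℕ} [Fact p.Prime]
    (hjm : j ≤ m) (hj : padicValNat p (m.choose j) = Nat.log p m) (him : i ≤ m) :
    padicValNat p (j.factorial * (m - j).factorial) ≤
      padicValNat p (i.factorial * (m - i).factorial) := by
  have hi := padicValNat_factorial_mul_factorial_add_choose (p := p) him
  have hj' := padicValNat_factorial_mul_factorial_add_choose (p := p) hjm
  have hle : padicValNat p (m.choose i) ≤ Nat.log p m := by
    simpa [Nat.factorization_def _ Fact.out] using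
      Nat.factorization_choose_le_log (p := p) (n := m) (k := i)
  omega

def kappa (n i : ℕ) : ℕ := (2 * n).factorial * (i.factorial * (2 * n + 1 - i).factorial)

theorem kappa_symm {n i : ℕ} (hi : i ≤ 2 * n + 1) : kappa n (2 * n + 1 - i) = kappa n i := by
  rw [kappa, kappa, Nat.sub_sub_self hi, mul_comm i.factorial]

theorem choose_mul_alph_sq {n i : ℕ} (hi : i ≤ 2 * n) :
    (2 * n).choose i * alph n i ^ 2 = kappa n i * (2 * n + 1 - i) := by
  rw [alph, kappa, show 2 * n + 1 - i = 2 * n - i + 1 by omega, Nat.factorial_succ,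
    ← Nat.choose_mul_factorial_mul_factorial hi]
  ring

theorem choose_mul_bet_sq {n i : ℕ} (hi : i ≤ 2 * n) :
    (2 * n).choose i * bet n i ^ 2 = kappa n (i + 1) * (i + 1) := by
  rw [bet, kappa, Nat.add_sub_add_right, Nat.factorial_succ,
    ← Nat.choose_mul_factorial_mul_factorial hi]
  ring

theorem C_dvd_C_mul_X_mul_X {σ : Type*} {c a : ℤ} (h : c ∣ a) (i k : σ) :
    (C c : MvPolynomial σ ℤ) ∣ C a * X i * X k :=
  ((map_dvd C h).mul_right _).mul_right _

section divisibility

variable {n d : ℕ} (hd : ∀ i ≤ 2 * n + 1, d ∣ kappa n i)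
include hd

theorem dvd_choose_mul_alph_sq {i : ℕ} (hi : i ≤ 2 * n) :
    d ∣ (2 * n).choose i * alph n i ^ 2 := by
  rw [choose_mul_alph_sq hi]
  exact (hd i (by omega)).mul_right _

theorem dvd_choose_mul_bet_sq {i : ℕ} (hi : i ≤ 2 * n) :
    d ∣ (2 * n).choose i * bet n i ^ 2 := by
  rw [choose_mul_bet_sq hi]
  exact (hd (i + 1) (by omega)).mul_right _

theorem dvd_choose_mul_alph_mul_bet {i : ℕ} (hi : i ≤ 2 * n) :
    d ∣ (2 * n).choose i * alph n i * bet n i := by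
  refine (Nat.pow_dvd_pow_iff two_ne_zero).mp ?_
  rw [show ((2 * n).choose i * alph n i * bet n i) ^ 2 =
    (2 * n).choose i * alph n i ^ 2 * ((2 * n).choose i * bet n i ^ 2) by ring, sq]
  exact mul_dvd_mul (dvd_choose_mul_alph_sq hd hi) (dvd_choose_mul_bet_sq hd hi)

theorem C_dvd_An : C (d : ℤ) ∣ An n := by
  refine dvd_sum fun i hi => C_dvd_C_mul_X_mul_X ?_ _ _
  have := Int.natCast_dvd_natCast.mpr
    (dvd_choose_mul_alph_mul_bet hd (Nat.lt_succ_iff.mp (mem_range.mp hi)))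
  push_cast at this
  simpa only [mul_assoc] using this.mul_left ((-1) ^ i)

theorem C_dvd_Cpoly : C (d : ℤ) ∣ Cpoly n := by
  refine dvd_sum fun i hi => C_dvd_C_mul_X_mul_X ?_ _ _
  have := Int.natCast_dvd_natCast.mpr
    (dvd_choose_mul_alph_mul_bet hd (Nat.lt_succ_iff.mp (mem_range.mp hi)))
  push_cast at this
  simpa only [mul_assoc] using this.mul_left ((-1) ^ i)

theorem C_dvd_Bn : C (d : ℤ) ∣ Bn n := by
  refine dvd_sum fun i hi => ?_
  have hi : i ≤ 2 * n := Nat.lt_succ_iff.mp (mem_range.mp hi)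
  have hα := Int.natCast_dvd_natCast.mpr (dvd_choose_mul_alph_sq hd hi)
  have hβ := Int.natCast_dvd_natCast.mpr (dvd_choose_mul_bet_sq hd hi)
  push_cast at hα hβ
  simp only [mul_add, ← mul_assoc, ← map_mul]
  exact dvd_add
    (C_dvd_C_mul_X_mul_X (by simpa only [mul_assoc] using hα.mul_left ((-1) ^ i)) _ _)
    (C_dvd_C_mul_X_mul_X (by simpa only [mul_assoc] using hβ.mul_left ((-1) ^ i)) _ _)

theorem C_sq_dvd_Δn : C ((d : ℤ) ^ 2) ∣ Δn n := by
  rw [Δn, sq, sq, map_mul, mul_comm 4, mul_assoc]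
  exact dvd_sub (mul_dvd_mul (C_dvd_Bn hd) (C_dvd_Bn hd))
    (mul_dvd_mul (C_dvd_An hd) ((C_dvd_Cpoly hd).mul_left 4))

end divisibility

theorem dvd_gcd_coeff_of_C_dvd {σ R : Type*} [CommRing R] [IsDomain R] [NormalizedGCDMonoid R]
    {c : R} {P : MvPolynomial σ R} (h : C c ∣ P) : c ∣ P.support.gcd (fun m => coeff m P) :=
  Finset.dvd_gcd fun m _ => (C_dvd_iff_dvd_coeff c P).mp h m

theorem gcd_coeff_dvd_eval {σ R : Type*} [CommRing R] [IsDomain R] [NormalizedGCDMonoid R]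
    (v : σ → R) (P : MvPolynomial σ R) : P.support.gcd (fun m => coeff m P) ∣ eval v P := by
  rw [eval_eq]
  exact dvd_sum fun m hm => (Finset.gcd_dvd hm).mul_right _

theorem exists_index_padicValNat_choose_eq_log {n : ℕ} (h3 : 3 ∣ n + 2)
    (hpow : ∀ k : ℕ, n + 2 ≠ 3 ^ k) :
    ∃ j, 1 ≤ j ∧ j ≤ 2 * n ∧ j ≠ n ∧ j ≠ n + 1 ∧ j % 3 = 1 ∧
      padicValNat 3 ((2 * n + 1).choose j) = Nat.log 3 (2 * n + 1) := by
  have : Fact (Nat.Prime 3) := ⟨Nat.prime_three⟩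
  set M := 2 * n + 1
  set L := Nat.log 3 M
  have hL : 1 ≤ L := Nat.le_log_of_pow_le (by norm_num) (by omega)
  have h3L : 3 ∣ 3 ^ L := dvd_pow_self 3 (by omega)
  have hLM : 3 ^ L ≤ M := Nat.pow_log_le_self 3 (by omega)
  have hML : M < 3 ^ L * 3 := by rw [← pow_succ]; exact Nat.lt_pow_succ_log_self (by norm_num) M
  have hdiv := Nat.div_add_mod M (3 ^ L)
  have hmod := Nat.mod_lt M (pow_pos three_pos L)
  have hmod3 : M % 3 ^ L % 3 = M % 3 := Nat.mod_mod_of_dvd M h3L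
  -- the quotient `M / 3 ^ L` is the leading base-3 digit of `M`, so it is 1 or 2
  have hq : M / 3 ^ L = 1 ∨ M / 3 ^ L = 2 := by
    have h1 : 1 ≤ M / 3 ^ L := (Nat.one_le_div_iff (by positivity)).mpr hLM
    have h2 : M / 3 ^ L < 3 := Nat.div_lt_of_lt_mul hML
    omega
  -- `j - 1 = M % 3 ^ L` makes `M - j ≡ -1 (mod 3 ^ L)`, so adding `j` and `M - j` in base 3
  -- carries at each of the `L` lowest digits
  refine ⟨M % 3 ^ L + 1, by omega, by omega, ?_, ?_, by omega, ?_⟩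
  · rcases hq with hq | hq <;> rw [hq] at hdiv
    · exact fun h => hpow L (by omega)
    · omega
  · rcases hq with hq | hq <;> rw [hq] at hdiv <;> omega
  · have hdvd : 3 ^ L ∣ M - (M % 3 ^ L + 1) + 1 := ⟨M / 3 ^ L, by omega⟩
    exact padicValNat_choose_eq_log (by omega) (by omega) hdvd

theorem padicValNat_kappa_le {p n i j : ℕ} [Fact p.Prime] (hj : j ≤ 2 * n + 1)
    (hjval : padicValNat p ((2 * n + 1).choose j) = Nat.log p (2 * n + 1)) (hi : i ≤ 2 * n + 1) :
    padicValNat p (kappa n j) ≤ padicValNat p (kappa n i) := by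
  rw [kappa, kappa, padicValNat.mul (Nat.factorial_ne_zero (2 * n)) (by positivity),
    padicValNat.mul (Nat.factorial_ne_zero (2 * n)) (by positivity)]
  exact Nat.add_le_add_left (padicValNat_factorial_mul_factorial_le_of_choose_eq_log hj hjval hi) _

def pairIndicator (n j i : ℕ) : ℤ := if i = j ∨ i = 2 * n + 1 - j then 1 else 0

theorem pairIndicator_mul_of_add_eq {n j i k : ℕ} (hj : j ≤ 2 * n + 1)
    (hik : i + k = 2 * n + 1) :
    pairIndicator n j i * pairIndicator n j k = pairIndicator n j i := by
  unfold pairIndicator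
  split_ifs <;> omega

theorem pairIndicator_mul_eq_zero {n j i k : ℕ} (hj : j ≤ 2 * n + 1) (hjn : j ≠ n)
    (hjn1 : j ≠ n + 1) (hik : i + k = 2 * n ∨ i + k = 2 * n + 2) :
    pairIndicator n j i * pairIndicator n j k = 0 := by
  unfold pairIndicator
  split_ifs <;> omega

theorem sum_range_mul_eq_add {N a b : ℕ} (f w : ℕ → ℤ)
    (hw : ∀ i < N, w i = if i = a ∨ i = b then 1 else 0) (hab : a ≠ b) (ha : a < N)
    (hb : b < N) : ∑ i ∈ range N, f i * w i = f a + f b := by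
  rw [sum_eq_add_of_mem a b (mem_range.2 ha) (mem_range.2 hb) hab, hw a ha, hw b hb]
  · simp [hab.symm]
  · rintro c hc ⟨hca, hcb⟩
    simp [hw c (mem_range.1 hc), hca, hcb]

theorem neg_one_pow_sub {m j : ℕ} (h : j ≤ m) : (-1 : ℤ) ^ (m - j) = (-1) ^ m * (-1) ^ j := by
  obtain ⟨k, rfl⟩ := Nat.exists_eq_add_of_le h
  rw [Nat.add_sub_cancel_left, pow_add, mul_right_comm, ← pow_add, ← two_mul, pow_mul]
  simp

section evaluation

variable {n j : ℕ}

theorem eval_pairIndicator_An (hj : j ≤ 2 * n) (hjn : j ≠ n) (hjn1 : j ≠ n + 1) :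
    eval (pairIndicator n j) (An n) = 0 := by
  refine (map_sum _ _ _).trans (sum_eq_zero fun i hi => ?_)
  rw [map_mul, map_mul, eval_C, eval_X, eval_X, mul_assoc,
    pairIndicator_mul_eq_zero (by omega) hjn hjn1 (Or.inl (by simp at hi; omega)), mul_zero]

theorem eval_pairIndicator_Cpoly (hj : j ≤ 2 * n) (hjn : j ≠ n) (hjn1 : j ≠ n + 1) :
    eval (pairIndicator n j) (Cpoly n) = 0 := by
  refine (map_sum _ _ _).trans (sum_eq_zero fun i hi => ?_)
  rw [map_mul, map_mul, eval_C, eval_X, eval_X, mul_assoc,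
    pairIndicator_mul_eq_zero (by omega) hjn hjn1 (Or.inr (by simp at hi; omega)), mul_zero]

theorem eval_pairIndicator_Bn (hj1 : 1 ≤ j) (hj : j ≤ 2 * n) :
    eval (pairIndicator n j) (Bn n) =
      (-1) ^ j * (2 * ((2 * n + 1 : ℤ) - 2 * j) * kappa n j) := by
  have hsplit : eval (pairIndicator n j) (Bn n) =
      ∑ i ∈ range (2 * n + 1), (-1) ^ i * (2 * n).choose i * (alph n i : ℤ) ^ 2 *
          pairIndicator n j i +
        ∑ i ∈ range (2 * n + 1), (-1) ^ i * (2 * n).choose i * (bet n i : ℤ) ^ 2 *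
          pairIndicator n j (i + 1) := by
    rw [Bn, map_sum, ← sum_add_distrib]
    refine sum_congr rfl fun i hi => ?_
    have hi : i ≤ 2 * n := Nat.lt_succ_iff.mp (mem_range.mp hi)
    simp only [map_mul, map_add, eval_C, eval_X, mul_assoc,
      pairIndicator_mul_of_add_eq (n := n) (j := j) (by omega)
        (show i + (2 * n + 1 - i) = _ by omega),
      pairIndicator_mul_of_add_eq (n := n) (j := j) (by omega)
        (show i + 1 + (2 * n - i) = _ by omega)]
    ring
  rw [hsplit, sum_range_mul_eq_add (a := j) (b := 2 * n + 1 - j) _ (pairIndicator n j)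
      (fun i _ => rfl) (by omega) (by omega) (by omega),
    sum_range_mul_eq_add (a := j - 1) (b := 2 * n - j) _ (fun i => pairIndicator n j (i + 1))
      (fun i _ => by unfold pairIndicator; split_ifs <;> omega) (by omega) (by omega) (by omega)]
  have e1 := choose_mul_alph_sq hj
  have e2 := choose_mul_alph_sq (show 2 * n + 1 - j ≤ 2 * n by omega)
  have e3 := choose_mul_bet_sq (show j - 1 ≤ 2 * n by omega)
  have e4 := choose_mul_bet_sq (show 2 * n - j ≤ 2 * n by omega)
  rw [Nat.sub_add_cancel hj1] at e3
  rw [show 2 * n - j + 1 = 2 * n + 1 - j by omega, kappa_symm (by omega)] at e4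
  rw [kappa_symm (by omega), Nat.sub_sub_self (by omega)] at e2
  zify [show j ≤ 2 * n + 1 by omega] at e1 e2 e3 e4
  rw [neg_one_pow_sub (show j ≤ 2 * n + 1 by omega), neg_one_pow_sub hj, neg_one_pow_sub hj1,
    (even_two_mul n).neg_one_pow, (odd_two_mul_add_one n).neg_one_pow]
  linear_combination (-1) ^ j * (e1 - e2 - e3 + e4)

theorem eval_pairIndicator_Δn (hj1 : 1 ≤ j) (hj : j ≤ 2 * n) (hjn : j ≠ n) (hjn1 : j ≠ n + 1) :
    eval (pairIndicator n j) (Δn n) = (2 * ((2 * n + 1 : ℤ) - 2 * j) * kappa n j) ^ 2 := by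
  rw [Δn, map_sub, map_pow, map_mul, map_mul, eval_pairIndicator_An hj hjn hjn1,
    eval_pairIndicator_Cpoly hj hjn hjn1, eval_pairIndicator_Bn hj1 hj, mul_pow, ← pow_mul,
    pow_mul', neg_one_sq]
  ring

end evaluation

theorem padicValInt_mul_natCast_sq {p : ℕ} [Fact p.Prime] {a : ℤ} {K : ℕ} (ha : ¬ (p : ℤ) ∣ a)
    (hK : K ≠ 0) : padicValInt p ((a * K) ^ 2) = 2 * padicValNat p K := by
  have ha0 : a ≠ 0 := by rintro rfl; exact ha (dvd_zero _)
  have hK0 : (K : ℤ) ≠ 0 := Nat.cast_ne_zero.mpr hK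
  rw [sq, padicValInt.mul (mul_ne_zero ha0 hK0) (mul_ne_zero ha0 hK0),
    padicValInt.mul ha0 hK0, padicValInt.eq_zero_of_not_dvd ha, padicValInt.of_nat]
  ring

theorem padicValInt_eq_of_pow_dvd_of_dvd {p k : ℕ} [Fact p.Prime] {S T : ℤ}
    (hS : (p : ℤ) ^ k ∣ S) (hST : S ∣ T) (hT : T ≠ 0) (hTk : padicValInt p T = k) :
    padicValInt p S = k := by
  have hS0 : S ≠ 0 := by rintro rfl; exact hT (zero_dvd_iff.mp hST)
  have hle : k ≤ padicValInt p S := ((padicValInt_dvd_iff k S).mp hS).resolve_left hS0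
  have hge : padicValInt p S ≤ k :=
    hTk ▸ ((padicValInt_dvd_iff _ T).mp ((padicValInt_dvd S).trans hST)).resolve_left hT
  omega

theorem stmt19_general (n : ℕ) (h3 : 3 ∣ n + 2)
    (hpow : ∀ k : ℕ, n + 2 ≠ 3 ^ k) :
    Even (padicValInt 3 (Sn n)) := by
  have : Fact (Nat.Prime 3) := ⟨Nat.prime_three⟩
  obtain ⟨j, hj1, hj, hjn, hjn1, hj3, hjval⟩ := exists_index_padicValNat_choose_eq_log h3 hpow
  set b := padicValNat 3 (kappa n j)
  have hkappa : ∀ i ≤ 2 * n + 1, 3 ^ b ∣ kappa n i := fun i hi =>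
    (pow_dvd_pow 3 (padicValNat_kappa_le (by omega) hjval hi)).trans pow_padicValNat_dvd
  have hS : (3 : ℤ) ^ (2 * b) ∣ Sn n := by
    have := dvd_gcd_coeff_of_C_dvd (C_sq_dvd_Δn hkappa)
    push_cast at this
    rwa [pow_mul']
  have hST := gcd_coeff_dvd_eval (pairIndicator n j) (Δn n)
  rw [eval_pairIndicator_Δn hj1 hj hjn hjn1] at hST
  have ha : ¬ (3 : ℤ) ∣ 2 * ((2 * n + 1 : ℤ) - 2 * j) := by omega
  have hK : kappa n j ≠ 0 := by unfold kappa; positivity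
  have hT : (2 * ((2 * n + 1 : ℤ) - 2 * j) * kappa n j) ^ 2 ≠ 0 :=
    pow_ne_zero 2 (mul_ne_zero (by omega) (Nat.cast_ne_zero.mpr hK))
  rw [padicValInt_eq_of_pow_dvd_of_dvd hS hST hT (padicValInt_mul_natCast_sq ha hK)]
  exact even_two_mul b

theorem stmt19 (n : ℕ) (hn : 1 ≤ n) (h3 : 3 ∣ n + 2)
    (hpow : ∀ k : ℕ, n + 2 ≠ 3 ^ k) :
    Even (padicValInt 3 (Sn n)) :=
  stmt19_general n h3 hpow
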